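/- arXiv:2408.09247 — 10 statements merged into one kernel-verified Lean document; each statement's English description precedes it below -/
import Mathlib

section
/- For all integers m ≥ n ≥ 0 with n even, the product of Fibonacci numbers F_m · F_n equals the sum over r from 1 to n/2 of F_{m+n+2-4r}. -/
theorem fib_aux (k : ℕ) : ∀ m, 2 * k ≤ m →
    Nat.fib m * Nat.fib (2 * k) = ∑ r ∈ Finset.Icc 1 k, Nat.fib (m + 2 * k + 2 - 4 * r) := by
  induction k with
  | zero => simp
  | succ k ih =>
    intro m hm
    obtain ⟨a, rfl⟩ : ∃ a, m = a + 2 := ⟨m - 2, by omega⟩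
    have ha : 2 * k ≤ a := by omega
    rw [← Finset.Ico_add_one_right_eq_Icc, Finset.sum_Ico_eq_sum_range]
    have hk1 : k + 1 + 1 - 1 = k + 1 := by omega
    rw [hk1, Finset.sum_range_succ']
    have h1 : (∑ i ∈ Finset.range k,
        Nat.fib (a + 2 + 2 * (k + 1) + 2 - 4 * (1 + (i + 1)))) =
        ∑ r ∈ Finset.Icc 1 k, Nat.fib (a + 2 * k + 2 - 4 * r) := by
      rw [← Finset.Ico_add_one_right_eq_Icc, Finset.sum_Ico_eq_sum_range]
      have : k + 1 - 1 = k := by omega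
      rw [this]
      apply Finset.sum_congr rfl
      intro i hi
      simp only [Finset.mem_range] at hi
      congr 1
      omega
    rw [h1, ← ih a ha]
    have h2 : a + 2 + 2 * (k + 1) + 2 - 4 * (1 + 0) = a + 2 * k + 2 := by omega
    rw [h2]
    have h3 : a + 2 * k + 2 = (a + 1) + 2 * k + 1 := by omega
    have hfa := Nat.fib_add (a + 1) (2 * k)
    have h4 : 2 * (k + 1) = 2 * k + 2 := by omega
    have h5 : a + 1 + 1 = a + 2 := rfl
    rw [h5] at hfa
    rw [h4, h3, hfa, Nat.fib_add_two, Nat.fib_add_two]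
    ring

theorem fib_mul_fib_even (m n : ℕ) (hmn : n ≤ m) (hn : Even n) :
    Nat.fib m * Nat.fib n = ∑ r ∈ Finset.Icc 1 (n / 2), Nat.fib (m + n + 2 - 4 * r) := by
  obtain ⟨k, rfl⟩ := hn
  have h1 : k + k = 2 * k := by omega
  have h2 : (k + k) / 2 = k := by omega
  rw [h2, h1]
  exact fib_aux k m (by omega)
end

section
/- For all integers m ≥ n ≥ 1 with n odd, the product of Fibonacci numbers F_m · F_n equals F_{m-n+1} plus the sum over r from 1 to ⌊n/2⌋ of F_{m+n+2-4r}. -/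
lemma fib_key (j : ℕ) : ∀ k, Nat.fib (2*j+1+k) * Nat.fib (2*j+1) =
    Nat.fib (k+1) + ∑ s ∈ Finset.range j, Nat.fib (k+4*s+4) := by
  induction j with
  | zero => intro k; simp [Nat.add_comm]
  | succ j ih =>
    intro k
    have h1 := ih (k+2)
    have hadd := Nat.fib_add (2*j+2+k) (2*j+1)
    apply Nat.add_right_cancel (m := Nat.fib (2*j+2+k) * Nat.fib (2*j+1))
    have hsplit : Nat.fib (2*(j+1)+1) = Nat.fib (2*j+1) + Nat.fib (2*j+2) := by
      have h : 2*(j+1)+1 = (2*j+1)+2 := by ring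
      rw [h, Nat.fib_add_two]
    have hm : 2*(j+1)+1+k = 2*j+1+(k+2) := by ring
    have hm2 : 2*j+2+k+1 = 2*j+1+(k+2) := by ring
    have hn2 : 2*j+1+1 = 2*j+2 := by ring
    have e3 : 2*j+2+k+(2*j+1)+1 = 4*j+4+k := by ring
    rw [e3, hm2, hn2] at hadd
    rw [hm, hsplit, Nat.mul_add]
    -- LHS = fib(2j+1+(k+2)) * fib(2j+1) + fib(2j+1+(k+2)) * fib(2j+2) + fib(2j+2+k)*fib(2j+1)
    rw [h1]
    have haddsum : Nat.fib (2*j+1+(k+2)) * Nat.fib (2*j+2) + Nat.fib (2*j+2+k) * Nat.fib (2*j+1)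
        = Nat.fib (4*j+4+k) := by rw [hadd]; ring
    rw [Nat.add_assoc, haddsum]
    -- RHS side
    rw [Finset.sum_range_succ]
    have h2 := ih (k+1)
    apply Nat.add_right_cancel (m := Nat.fib (k+1+1) + ∑ s ∈ Finset.range j, Nat.fib (k+1+4*s+4))
    have hsum : ∑ s ∈ Finset.range j, Nat.fib (k+4*s+4) +
        ∑ s ∈ Finset.range j, Nat.fib (k+1+4*s+4) =
        ∑ s ∈ Finset.range j, Nat.fib (k+2+4*s+4) := by
      rw [← Finset.sum_add_distrib]
      apply Finset.sum_congr rfl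
      intro s _
      have h := Nat.fib_add_two (n := k+4*s+4)
      have e1 : k+4*s+4+1 = k+1+4*s+4 := by ring
      have e2 : k+4*s+4+2 = k+2+4*s+4 := by ring
      rw [e1, e2] at h
      omega
    have hk3 : Nat.fib (k+2+1) = Nat.fib (k+1) + Nat.fib (k+1+1) := by
      have h : k+2+1 = (k+1)+2 := by ring
      rw [h, Nat.fib_add_two]
    calc Nat.fib (k+2+1) + ∑ s ∈ Finset.range j, Nat.fib (k+2+4*s+4) + Nat.fib (4*j+4+k) +
          (Nat.fib (k+1+1) + ∑ s ∈ Finset.range j, Nat.fib (k+1+4*s+4))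
        = Nat.fib (k+2+1) + (∑ s ∈ Finset.range j, Nat.fib (k+4*s+4) +
            ∑ s ∈ Finset.range j, Nat.fib (k+1+4*s+4)) + Nat.fib (4*j+4+k) +
          (Nat.fib (k+1+1) + ∑ s ∈ Finset.range j, Nat.fib (k+1+4*s+4)) := by rw [hsum]
      _ = (Nat.fib (k+1) + Nat.fib (k+1+1)) + (∑ s ∈ Finset.range j, Nat.fib (k+4*s+4) +
            ∑ s ∈ Finset.range j, Nat.fib (k+1+4*s+4)) + Nat.fib (4*j+4+k) +
          (Nat.fib (k+1+1) + ∑ s ∈ Finset.range j, Nat.fib (k+1+4*s+4)) := by rw [hk3]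
      _ = Nat.fib (k+1) + (Nat.fib (k+1+1) + ∑ s ∈ Finset.range j, Nat.fib (k+1+4*s+4)) +
            ∑ s ∈ Finset.range j, Nat.fib (k+4*s+4) + Nat.fib (4*j+4+k) +
          (Nat.fib (k+1+1) + ∑ s ∈ Finset.range j, Nat.fib (k+1+4*s+4)) := by ring
      _ = Nat.fib (k+1) + (∑ s ∈ Finset.range j, Nat.fib (k+4*s+4) + Nat.fib (k+4*j+4)) +
          Nat.fib (2*j+2+k) * Nat.fib (2*j+1) +
          (Nat.fib (k+1+1) + ∑ s ∈ Finset.range j, Nat.fib (k+1+4*s+4)) := by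
            rw [show (2*j+2+k) = 2*j+1+(k+1) from by ring, h2,
              show k+4*j+4 = 4*j+4+k from by ring]
            ring

theorem fib_mul_fib_odd (m n : ℕ) (hn1 : 1 ≤ n) (hmn : n ≤ m) (hn : Odd n) :
    Nat.fib m * Nat.fib n =
      Nat.fib (m - n + 1) + ∑ r ∈ Finset.Icc 1 (n / 2), Nat.fib (m + n + 2 - 4 * r) := by
  obtain ⟨j, hj⟩ := hn
  set k := m - n with hk
  have hmk : m = 2*j+1+k := by omega
  have key := fib_key j k
  rw [hmk, hj]
  have hd : (2*j+1) / 2 = j := by omega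
  rw [hd]
  rw [← Finset.Ico_add_one_right_eq_Icc, Finset.sum_Ico_eq_sum_range]
  have hrw : ∀ i ∈ Finset.range (j+1-1), Nat.fib (2*j+1+k + (2*j+1) + 2 - 4*(1+i)) =
      Nat.fib (k + 4*j - 4*i) := by
    intro i hi
    simp only [Finset.mem_range] at hi
    congr 1
    omega
  rw [Finset.sum_congr rfl hrw]
  have hj1 : j + 1 - 1 = j := by omega
  rw [hj1]
  have hre := Finset.sum_range_reflect (fun s => Nat.fib (k+4*s+4)) j
  have hre2 : ∑ i ∈ Finset.range j, Nat.fib (k + 4*j - 4*i) =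
      ∑ s ∈ Finset.range j, Nat.fib (k+4*s+4) := by
    rw [← hre]
    apply Finset.sum_congr rfl
    intro i hi
    simp only [Finset.mem_range] at hi
    congr 1
    omega
  rw [hre2, key]
end

section
/- For every n ≥ 2, every residue class modulo F_{2n} can be written as a sum of n-1 elements (with repetition allowed) of the set A = {0} ∪ {F_{2k-1} : 1 ≤ k ≤ n} ⊆ ℤ/F_{2n}ℤ. -/
/-! Greedy representation in `ℕ`: every `m < F (2k + 2)` is a sum of `k` terms from
`{0, F 1, F 3, …, F (2k + 1)}`. Subtracting the largest odd-index Fibonacci number `≤ m` drops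
the bound from `F (2k + 4)` to `F (2k + 2)`, because `F (2k + 4) - F (2k + 3)` and
`F (2k + 3) - F (2k + 1)` both equal `F (2k + 2)`. Casting the representation of `x.val`
into `ZMod (F (2n))` gives the theorem. -/

open Nat

def IsFanSummand (n a : ℕ) : Prop :=
  a = 0 ∨ ∃ k, 1 ≤ k ∧ k ≤ n ∧ a = fib (2 * k - 1)

lemma IsFanSummand.mono {n n' a : ℕ} (h : IsFanSummand n a) (hn : n ≤ n') :
    IsFanSummand n' a := by
  rcases h with h | ⟨k, hk1, hkn, rfl⟩
  · exact .inl h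
  · exact .inr ⟨k, hk1, hkn.trans hn, rfl⟩

lemma isFanSummand_fib_odd {n k : ℕ} (hk : k < n) : IsFanSummand n (fib (2 * k + 1)) :=
  .inr ⟨k + 1, by omega, hk, by congr 1⟩

lemma exists_isFanSummand_sub_lt_fib {k m : ℕ} (hm : m < fib (2 * k + 4)) :
    ∃ a, IsFanSummand (k + 2) a ∧ a ≤ m ∧ m - a < fib (2 * k + 2) := by
  have h4 : fib (2 * k + 4) = fib (2 * k + 2) + fib (2 * k + 3) := fib_add_two
  have h3 : fib (2 * k + 3) = fib (2 * k + 1) + fib (2 * k + 2) := fib_add_two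
  by_cases hlow : m < fib (2 * k + 2)
  · exact ⟨0, .inl rfl, zero_le m, by omega⟩
  by_cases hhigh : fib (2 * k + 3) ≤ m
  · exact ⟨fib (2 * k + 3), isFanSummand_fib_odd (k := k + 1) (by omega), hhigh, by omega⟩
  · have hmono : fib (2 * k + 1) ≤ fib (2 * k + 2) := fib_mono (by omega)
    exact ⟨fib (2 * k + 1), isFanSummand_fib_odd (k := k) (by omega), by omega, by omega⟩

lemma exists_sum_isFanSummand (k : ℕ) {m : ℕ} (hm : m < fib (2 * k + 2)) :
    ∃ g : Fin k → ℕ, (∀ i, IsFanSummand (k + 1) (g i)) ∧ ∑ i, g i = m := by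
  induction k generalizing m with
  | zero =>
    have hm0 : m = 0 := by simpa using hm
    exact ⟨Fin.elim0, Fin.rec0, by simp [hm0]⟩
  | succ k ih =>
    obtain ⟨a, ha, ham, hrest⟩ := exists_isFanSummand_sub_lt_fib (k := k) (m := m) (by omega)
    obtain ⟨g, hg, hsum⟩ := ih hrest
    refine ⟨Fin.cons a g, Fin.cases ha fun i => (hg i).mono (by omega), ?_⟩
    rw [Fin.sum_cons, hsum]
    omega

theorem fan_sumset_covers (n : ℕ) (hn : 2 ≤ n) (x : ZMod (Nat.fib (2 * n))) :
    ∃ f : Fin (n - 1) → ZMod (Nat.fib (2 * n)),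
      (∀ i, f i = 0 ∨ ∃ k, 1 ≤ k ∧ k ≤ n ∧ f i = (Nat.fib (2 * k - 1) : ZMod (Nat.fib (2 * n)))) ∧
      ∑ i, f i = x := by
  obtain ⟨k, rfl⟩ : ∃ k, n = k + 1 := ⟨n - 1, by omega⟩
  have : NeZero (fib (2 * (k + 1))) := ⟨(fib_pos.2 (by omega)).ne'⟩
  obtain ⟨g, hg, hsum⟩ := exists_sum_isFanSummand k (x.val_lt.trans_eq (by ring_nf))
  refine ⟨fun i => g i, fun i => ?_, ?_⟩
  · rcases hg i with h | ⟨j, hj1, hjn, h⟩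
    · exact .inl (by simp [h])
    · exact .inr ⟨j, hj1, hjn, by simp [h]⟩
  · rw [← ZMod.natCast_zmod_val x, ← hsum, Nat.cast_sum]
    rfl
end

section
/- For every n ≥ 2, every residue class modulo F_{2n} can be written as a sum of n-1 elements (with repetition allowed) of the set A = {F_k·F_{2n-k} mod F_{2n} : 0 ≤ k ≤ n} ⊆ ℤ/F_{2n}ℤ. -/
namespace StripAux

/-- `F k` is the `k`-th Fibonacci number, as an integer. -/
def F (k : ℕ) : ℤ := (Nat.fib k : ℤ)

lemma F_rec (k : ℕ) : F (k + 2) = F k + F (k + 1) := by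
  unfold F; push_cast [Nat.fib_add_two]; ring

lemma F_nonneg (k : ℕ) : 0 ≤ F k := Int.natCast_nonneg _

lemma F_mono {a b : ℕ} (h : a ≤ b) : F a ≤ F b := by
  unfold F; exact_mod_cast Nat.fib_mono h

/-- Cassini's identity. -/
lemma cassini (s : ℕ) : F (s + 1) ^ 2 - F (s + 1) * F s - F s ^ 2 = (-1 : ℤ) ^ s := by
  induction s with
  | zero => simp [F]
  | succ s ih =>
      have h2 : F (s + 1 + 1) = F s + F (s + 1) := F_rec s
      rw [pow_succ]
      linear_combination (-1 : ℤ) * ih + (F (s + 1 + 1) + F s) * h2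

/-- `F (2r+1) = F (r+1)^2 + F r ^2`. -/
lemma fib_odd_sq (r : ℕ) : F (2 * r + 1) = F (r + 1) ^ 2 + F r ^ 2 := by
  unfold F; push_cast [Nat.fib_two_mul_add_one]; ring

/-- Addition formula. -/
lemma fib_add' (a b : ℕ) : F (a + b + 1) = F a * F b + F (a + 1) * F (b + 1) := by
  unfold F; push_cast [Nat.fib_add]; ring

/-- Catalan's identity, in the form `F s · F (s+2r) + (-1)^s F r ^ 2 = F (s+r)^2`. -/
lemma catalan (r s : ℕ) : F s * F (s + 2 * r) + (-1 : ℤ) ^ s * F r ^ 2 = F (s + r) ^ 2 := by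
  cases r with
  | zero => simp [F]; ring
  | succ r =>
      have h1 : F (s + 2 * (r + 1)) = F s * F (2 * r + 1) + F (s + 1) * F (2 * r + 2) := by
        have e : s + 2 * (r + 1) = s + (2 * r + 1) + 1 := by ring
        rw [e, fib_add' s (2 * r + 1)]
      have h2 : F (s + (r + 1)) = F s * F r + F (s + 1) * F (r + 1) := by
        have e : s + (r + 1) = s + r + 1 := by ring
        rw [e, fib_add' s r]
      have h3 : F (2 * r + 1) = F (r + 1) ^ 2 + F r ^ 2 := fib_odd_sq r
      have h4 : F (2 * r + 2) = F r * F (r + 1) + F (r + 1) * F (r + 2) := by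
        have e : 2 * r + 2 = r + (r + 1) + 1 := by ring
        rw [e, fib_add' r (r + 1)]
      have h5 : F (r + 2) = F r + F (r + 1) := F_rec r
      have hc : F (s + 1) ^ 2 - F (s + 1) * F s - F s ^ 2 = (-1 : ℤ) ^ s := cassini s
      rw [h1, h2, h3, h4, h5]
      linear_combination (-(F (r + 1) ^ 2)) * hc

/-- the summands: `c k = (-1)^(k+1) * F k ^ 2`. -/
def c (k : ℕ) : ℤ := (-1 : ℤ) ^ (k + 1) * F k ^ 2

lemma c_even {k : ℕ} (h : Even k) : c k = -(F k ^ 2) := by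
  have h' : Odd (k + 1) := Even.add_one h
  simp [c, h'.neg_one_pow]

lemma c_odd {k : ℕ} (h : Odd k) : c k = F k ^ 2 := by
  have h' : Even (k + 1) := Odd.add_one h
  simp [c, h'.neg_one_pow]

/-- lower endpoint of the covered interval. -/
def lo : ℕ → ℤ
  | 0 => 0
  | 1 => -1
  | (m + 2) => lo (m + 1) - F (if Even m then m + 2 else m + 3) ^ 2

/-- upper endpoint of the covered interval. -/
def hi : ℕ → ℤ
  | 0 => 0
  | 1 => 1
  | (m + 2) => hi (m + 1) + F (if Even m then m + 3 else m + 2) ^ 2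

/-- the covered interval has length `F (2m+4)`. -/
lemma len (m : ℕ) : hi (m + 1) - lo (m + 1) + 1 = F (2 * m + 4) := by
  induction m with
  | zero =>
      show hi 1 - lo 1 + 1 = F 4
      show (1 : ℤ) - (-1) + 1 = ((Nat.fib 4 : ℕ) : ℤ)
      norm_num [show Nat.fib 4 = 3 from rfl]
  | succ m ih =>
      have key : hi (m + 2) - lo (m + 2) + 1
          = (hi (m + 1) - lo (m + 1) + 1) + (F (m + 2) ^ 2 + F (m + 3) ^ 2) := by
        by_cases h : Even m <;> simp [hi, lo, h] <;> ring
      have hodd2 : F (2 * m + 5) = F (m + 3) ^ 2 + F (m + 2) ^ 2 := by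
        have h := fib_odd_sq (m + 2)
        have e : 2 * (m + 2) + 1 = 2 * m + 5 := by ring
        have e2 : m + 2 + 1 = m + 3 := by ring
        rw [e, e2] at h
        exact h
      have hrec : F (2 * m + 6) = F (2 * m + 4) + F (2 * m + 5) := by
        have h := F_rec (2 * m + 4)
        have e : 2 * m + 4 + 2 = 2 * m + 6 := by ring
        have e2 : 2 * m + 4 + 1 = 2 * m + 5 := by ring
        rw [e, e2] at h
        exact h
      have e3 : 2 * (m + 1) + 4 = 2 * m + 6 := by ring
      rw [key, ih, e3, hrec, hodd2]
      ring

lemma sq_fib_le (m : ℕ) : F (m + 2) ^ 2 ≤ F (2 * m + 4) := by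
  have h1 : F (2 * m + 3) = F (m + 2) ^ 2 + F (m + 1) ^ 2 := by
    have h := fib_odd_sq (m + 1)
    have e : 2 * (m + 1) + 1 = 2 * m + 3 := by ring
    have e2 : m + 1 + 1 = m + 2 := by ring
    rw [e, e2] at h
    exact h
  have h2 : F (2 * m + 3) ≤ F (2 * m + 4) := F_mono (by omega)
  nlinarith [sq_nonneg (F (m + 1))]

lemma sq_fib_le' (m : ℕ) : F (m + 1) ^ 2 ≤ F (2 * m + 4) := by
  have h1 : F (m + 1) ≤ F (m + 2) := F_mono (by omega)
  have h2 := sq_fib_le m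
  have h0 := F_nonneg (m + 1)
  nlinarith

lemma sq_diff (m : ℕ) : F (m + 3) ^ 2 - F (m + 1) ^ 2 = F (2 * m + 4) := by
  have h1 : F (2 * m + 4) = F (m + 1) * F (m + 2) + F (m + 2) * F (m + 3) := by
    have e : 2 * m + 4 = (m + 1) + (m + 2) + 1 := by ring
    rw [e, fib_add' (m + 1) (m + 2)]
  have h2 : F (m + 3) = F (m + 1) + F (m + 2) := F_rec (m + 1)
  rw [h1]; linear_combination (F (m + 3) + F (m + 1)) * h2

/-- Step lemma: any point of the `(m+2)`-interval is one `c`-summand away from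
the `(m+1)`-interval. -/
lemma step (m : ℕ) (y : ℤ) (h1 : lo (m + 2) ≤ y) (h2 : y ≤ hi (m + 2)) :
    ∃ k, k ≤ m + 3 ∧ lo (m + 1) ≤ y - c k ∧ y - c k ≤ hi (m + 1) := by
  have hlen := len m
  have hle1 := sq_fib_le m
  have hle2 := sq_fib_le' m
  have hdiff := sq_diff m
  have hc0 : c 0 = 0 := by simp [c, F]
  by_cases hev : Even m
  · have hm2 : m % 2 = 0 := Nat.even_iff.mp hev
    have hl : lo (m + 2) = lo (m + 1) - F (m + 2) ^ 2 := by simp [lo, hev]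
    have hh : hi (m + 2) = hi (m + 1) + F (m + 3) ^ 2 := by simp [hi, hev]
    rw [hl] at h1; rw [hh] at h2
    have cm2 : c (m + 2) = -(F (m + 2) ^ 2) := c_even (Nat.even_iff.mpr (by omega))
    have cm3 : c (m + 3) = F (m + 3) ^ 2 := c_odd (Nat.odd_iff.mpr (by omega))
    have cm1 : c (m + 1) = F (m + 1) ^ 2 := c_odd (Nat.odd_iff.mpr (by omega))
    rcases le_or_gt (lo (m + 1)) y with hy1 | hy1
    · rcases le_or_gt y (hi (m + 1)) with hy2 | hy2
      · exact ⟨0, by omega, by rw [hc0]; constructor <;> omega⟩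
      · rcases le_or_gt (lo (m + 1)) (y - F (m + 3) ^ 2) with hy3 | hy3
        · exact ⟨m + 3, by omega, by rw [cm3]; constructor <;> linarith⟩
        · exact ⟨m + 1, by omega, by rw [cm1]; constructor <;> linarith⟩
    · exact ⟨m + 2, by omega, by rw [cm2]; constructor <;> linarith⟩
  · have hm2 : m % 2 = 1 := Nat.odd_iff.mp (Nat.not_even_iff_odd.mp hev)
    have hl : lo (m + 2) = lo (m + 1) - F (m + 3) ^ 2 := by simp [lo, hev]
    have hh : hi (m + 2) = hi (m + 1) + F (m + 2) ^ 2 := by simp [hi, hev]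
    rw [hl] at h1; rw [hh] at h2
    have cm2 : c (m + 2) = F (m + 2) ^ 2 := c_odd (Nat.odd_iff.mpr (by omega))
    have cm3 : c (m + 3) = -(F (m + 3) ^ 2) := c_even (Nat.even_iff.mpr (by omega))
    have cm1 : c (m + 1) = -(F (m + 1) ^ 2) := c_even (Nat.even_iff.mpr (by omega))
    rcases le_or_gt (lo (m + 1)) y with hy1 | hy1
    · rcases le_or_gt y (hi (m + 1)) with hy2 | hy2
      · exact ⟨0, by omega, by rw [hc0]; constructor <;> omega⟩
      · exact ⟨m + 2, by omega, by rw [cm2]; constructor <;> linarith⟩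
    · rcases le_or_gt (y + F (m + 3) ^ 2) (hi (m + 1)) with hy3 | hy3
      · exact ⟨m + 3, by omega, by rw [cm3]; constructor <;> linarith⟩
      · exact ⟨m + 1, by omega, by rw [cm1]; constructor <;> linarith⟩

/-- Coverage lemma: every point of the `(m+1)`-interval is a sum of `m+1`
summands `c k` with `k ≤ m + 2`. -/
lemma cover : ∀ m : ℕ, ∀ y : ℤ, lo (m + 1) ≤ y → y ≤ hi (m + 1) →
    ∃ g : Fin (m + 1) → ℕ, (∀ i, g i ≤ m + 2) ∧ ∑ i, c (g i) = y := by
  intro m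
  induction m with
  | zero =>
      intro y hy1 hy2
      have hlo : lo (0 + 1) = -1 := rfl
      have hhi : hi (0 + 1) = 1 := rfl
      have hy : y = -1 ∨ y = 0 ∨ y = 1 := by omega
      have c0 : c 0 = 0 := by simp [c, F]
      have c1 : c 1 = 1 := by
        simp [c, F, show Nat.fib 1 = 1 from rfl]
      have c2 : c 2 = -1 := by
        simp [c, F, show Nat.fib 2 = 1 from rfl]
      rcases hy with rfl | rfl | rfl
      · exact ⟨fun _ => 2, fun _ => by show 2 ≤ 0 + 2; omega, by simp [c2]⟩
      · exact ⟨fun _ => 0, fun _ => by show 0 ≤ 0 + 2; omega, by simp [c0]⟩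
      · exact ⟨fun _ => 1, fun _ => by show 1 ≤ 0 + 2; omega, by simp [c1]⟩
  | succ m ih =>
      intro y hy1 hy2
      obtain ⟨k, hk, hk1, hk2⟩ := step m y hy1 hy2
      obtain ⟨g, hg, hgs⟩ := ih (y - c k) hk1 hk2
      refine ⟨Fin.cons k g, ?_, ?_⟩
      · intro i
        refine Fin.cases ?_ ?_ i
        · simpa using hk
        · intro j; simpa using le_trans (hg j) (by omega)
      · have hcomp : ∀ i : Fin (m + 2),
            c ((Fin.cons k g : Fin (m + 2) → ℕ) i)
              = (Fin.cons (c k) (fun j => c (g j)) : Fin (m + 2) → ℤ) i := by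
          intro i
          refine Fin.cases ?_ ?_ i <;> simp
        rw [Finset.sum_congr rfl (fun i _ => hcomp i), Fin.sum_cons, hgs]
        ring

/-- Main lemma, with `n = m + 2`. -/
lemma main (m : ℕ) (x : ZMod (Nat.fib (2 * (m + 2)))) :
    ∃ f : Fin (m + 1) → ZMod (Nat.fib (2 * (m + 2))),
      (∀ i, ∃ k, k ≤ m + 2 ∧
        f i = (Nat.fib k * Nat.fib (2 * (m + 2) - k) : ℕ)) ∧
      ∑ i, f i = x := by
  haveI : NeZero (Nat.fib (2 * (m + 2))) :=
    ⟨(Nat.fib_pos.mpr (by omega)).ne'⟩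
  set z : ZMod (Nat.fib (2 * (m + 2))) :=
    (-1 : ZMod (Nat.fib (2 * (m + 2)))) ^ (m + 2)
      * (x - ((m + 1) * Nat.fib (m + 2) ^ 2 : ℕ)) with hz
  set t : ℕ := (z - (lo (m + 1) : ZMod (Nat.fib (2 * (m + 2))))).val with ht
  set y : ℤ := lo (m + 1) + t with hy
  have hycast : ((y : ℤ) : ZMod (Nat.fib (2 * (m + 2)))) = z := by
    rw [hy]
    push_cast
    rw [ht, ZMod.natCast_val, ZMod.cast_id]
    ring
  have hy1 : lo (m + 1) ≤ y := by
    rw [hy]; have : (0 : ℤ) ≤ t := Int.natCast_nonneg _; omega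
  have hy2 : y ≤ hi (m + 1) := by
    have hlt : t < Nat.fib (2 * (m + 2)) := ZMod.val_lt _
    have hlen : hi (m + 1) - lo (m + 1) + 1 = F (2 * m + 4) := len m
    have hMF : ((Nat.fib (2 * (m + 2)) : ℕ) : ℤ) = F (2 * m + 4) := by
      rw [show 2 * (m + 2) = 2 * m + 4 from by omega]; rfl
    have : (t : ℤ) < ((Nat.fib (2 * (m + 2)) : ℕ) : ℤ) := by exact_mod_cast hlt
    rw [hy]
    omega
  obtain ⟨g, hg, hgs⟩ := cover m y hy1 hy2
  refine ⟨fun i => ((Nat.fib ((m + 2) - g i) *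
      Nat.fib (2 * (m + 2) - ((m + 2) - g i)) : ℕ) : ZMod (Nat.fib (2 * (m + 2)))), ?_, ?_⟩
  · intro i
    exact ⟨(m + 2) - g i, Nat.sub_le _ _, rfl⟩
  · have key : ∀ i : Fin (m + 1),
        ((Nat.fib ((m + 2) - g i) * Nat.fib (2 * (m + 2) - ((m + 2) - g i)) : ℕ)
            : ZMod (Nat.fib (2 * (m + 2))))
          = ((F (m + 2) ^ 2 + (-1 : ℤ) ^ (m + 2) * c (g i) : ℤ)
            : ZMod (Nat.fib (2 * (m + 2)))) := by
      intro i
      set r := g i with hr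
      have hrn : r ≤ m + 2 := hg i
      have e1 : 2 * (m + 2) - ((m + 2) - r) = ((m + 2) - r) + 2 * r := by omega
      have e2 : ((m + 2) - r) + r = m + 2 := by omega
      have hcat := catalan r ((m + 2) - r)
      rw [e2] at hcat
      have hsign : ((-1 : ℤ)) ^ ((m + 2) - r) = (-1 : ℤ) ^ (m + 2) * (-1 : ℤ) ^ r := by
        have hkey : (-1 : ℤ) ^ ((m + 2) - r) * (-1 : ℤ) ^ r = (-1 : ℤ) ^ (m + 2) := by
          rw [← pow_add, show (m + 2) - r + r = m + 2 from by omega]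
        have hsq : (-1 : ℤ) ^ r * (-1 : ℤ) ^ r = 1 := by
          rw [← pow_add]; exact Even.neg_one_pow ⟨r, rfl⟩
        linear_combination ((-1 : ℤ) ^ r) * hkey - ((-1 : ℤ) ^ ((m + 2) - r)) * hsq
      have hint : (Nat.fib ((m + 2) - r) * Nat.fib (2 * (m + 2) - ((m + 2) - r)) : ℤ)
          = F (m + 2) ^ 2 + (-1 : ℤ) ^ (m + 2) * c r := by
        rw [e1]
        have hFF : (Nat.fib ((m + 2) - r) * Nat.fib (((m + 2) - r) + 2 * r) : ℤ)
            = F ((m + 2) - r) * F (((m + 2) - r) + 2 * r) := by unfold F; ring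
        rw [hFF]
        unfold c
        rw [pow_succ]
        linear_combination hcat - F r ^ 2 * hsign
      calc ((Nat.fib ((m + 2) - r) * Nat.fib (2 * (m + 2) - ((m + 2) - r)) : ℕ)
            : ZMod (Nat.fib (2 * (m + 2))))
          = ((Nat.fib ((m + 2) - r) * Nat.fib (2 * (m + 2) - ((m + 2) - r)) : ℤ)
            : ZMod (Nat.fib (2 * (m + 2)))) := by push_cast; ring
        _ = _ := by rw [hint]
    have hpow : ((-1 : ZMod (Nat.fib (2 * (m + 2))))) ^ (m + 2)
        * (-1 : ZMod (Nat.fib (2 * (m + 2)))) ^ (m + 2) = 1 := by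
      rw [← pow_add]; exact Even.neg_one_pow ⟨m + 2, rfl⟩
    have hsum : (∑ i : Fin (m + 1), (F (m + 2) ^ 2 + (-1 : ℤ) ^ (m + 2) * c (g i)) : ℤ)
        = (m + 1) * F (m + 2) ^ 2 + (-1 : ℤ) ^ (m + 2) * y := by
      rw [Finset.sum_add_distrib, ← Finset.mul_sum, hgs, Finset.sum_const]
      simp [Finset.card_univ]
    calc ∑ i : Fin (m + 1), ((Nat.fib ((m + 2) - g i) *
            Nat.fib (2 * (m + 2) - ((m + 2) - g i)) : ℕ) : ZMod (Nat.fib (2 * (m + 2))))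
        = ∑ i : Fin (m + 1), ((F (m + 2) ^ 2 + (-1 : ℤ) ^ (m + 2) * c (g i) : ℤ)
            : ZMod (Nat.fib (2 * (m + 2)))) := Finset.sum_congr rfl fun i _ => key i
      _ = ((∑ i : Fin (m + 1), (F (m + 2) ^ 2 + (-1 : ℤ) ^ (m + 2) * c (g i)) : ℤ)
            : ZMod (Nat.fib (2 * (m + 2)))) := by push_cast; ring
      _ = (((m + 1 : ℕ) * F (m + 2) ^ 2 + (-1 : ℤ) ^ (m + 2) * y : ℤ)
            : ZMod (Nat.fib (2 * (m + 2)))) := by rw [hsum]; push_cast; ring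
      _ = x := by
          unfold F
          push_cast
          rw [hycast, hz]
          push_cast
          linear_combination (x - ((m : ZMod (Nat.fib (2 * (m + 2)))) + 1)
            * (Nat.fib (m + 2) : ZMod (Nat.fib (2 * (m + 2)))) ^ 2) * hpow

end StripAux

theorem strip_sumset_covers (n : ℕ) (hn : 2 ≤ n) (x : ZMod (Nat.fib (2 * n))) :
    ∃ f : Fin (n - 1) → ZMod (Nat.fib (2 * n)),
      (∀ i, ∃ k, k ≤ n ∧
        f i = (Nat.fib k * Nat.fib (2 * n - k) : ℕ)) ∧
      ∑ i, f i = x := by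
  obtain ⟨m, rfl⟩ : ∃ m, n = m + 2 := ⟨n - 2, by omega⟩
  exact StripAux.main m x
end

section
/- For every n ≥ 2, every residue class modulo F_{2n} can be written as a sum of n-1 elements (with repetition allowed) of the set B = {(-1)^{k+1}·F_k² mod F_{2n} : 0 ≤ k ≤ n} ⊆ ℤ/F_{2n}ℤ. -/
private def b (k : ℕ) : ℤ := (-1) ^ (k + 1) * (Nat.fib k : ℤ) ^ 2

private lemma b_zero : b 0 = 0 := by simp [b]

private lemma b_odd (k : ℕ) (h : k % 2 = 1) : b k = (Nat.fib k : ℤ) ^ 2 := by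
  have he : Even (k + 1) := Nat.even_iff.mpr (by omega)
  simp [b, he.neg_one_pow]

private lemma b_even (k : ℕ) (h : k % 2 = 0) : b k = -((Nat.fib k : ℤ) ^ 2) := by
  have he : Odd (k + 1) := Nat.odd_iff.mpr (by omega)
  simp [b, he.neg_one_pow]

private lemma fib_sq_step (m : ℕ) :
    ((Nat.fib (m + 2) : ℤ)) ^ 2 = (Nat.fib m : ℤ) ^ 2 + Nat.fib (2 * m + 2) := by
  have h1 : Nat.fib (m + (m + 1) + 1) =
      Nat.fib m * Nat.fib (m + 1) + Nat.fib (m + 1) * Nat.fib (m + 2) := Nat.fib_add m (m + 1)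
  have h2 : Nat.fib (m + 2) = Nat.fib m + Nat.fib (m + 1) := Nat.fib_add_two
  have h3 : 2 * m + 2 = m + (m + 1) + 1 := by ring
  rw [h3]
  push_cast [h1, h2]
  ring

private lemma fib_cast_mono {a c : ℕ} (h : a ≤ c) : (Nat.fib a : ℤ) ≤ Nat.fib c := by
  exact_mod_cast Nat.fib_mono h

private lemma pos_cover (n : ℕ) (hfib : 1 ≤ (Nat.fib (2 * n) : ℤ)) (a : ℤ) :
    ∀ m : ℕ, m ≤ n + 1 → m % 2 = 1 → ∀ x : ℤ, a ≤ x →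
      x < a + (Nat.fib m : ℤ) ^ 2 + Nat.fib (2 * n) →
      ∃ k, k ≤ n + 1 ∧ a + b k ≤ x ∧ x < a + b k + Nat.fib (2 * n) := by
  intro m
  induction m using Nat.strong_induction_on with
  | _ m ih =>
    intro hm hodd x h1 h2
    by_cases hx0 : x < a + Nat.fib (2 * n)
    · exact ⟨0, by omega, by rw [b_zero]; constructor <;> linarith⟩
    · push_neg at hx0
      by_cases hxm : a + (Nat.fib m : ℤ) ^ 2 ≤ x
      · exact ⟨m, hm, by rw [b_odd m hodd]; constructor <;> linarith⟩
      · push_neg at hxm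
        match m, hodd, hm, hxm, ih with
        | 1, _, _, hxm, _ =>
          exfalso
          have : (Nat.fib 1 : ℤ) = 1 := by norm_num
          rw [this] at hxm
          norm_num at hxm
          linarith
        | (m' + 2), hodd', hm', hxm', ih' =>
          have hmo : m' % 2 = 1 := by omega
          have hle : 2 * m' + 2 ≤ 2 * n := by omega
          have hstep := fib_sq_step m'
          have hmono := fib_cast_mono hle
          exact ih' m' (by omega) (by omega) hmo x h1 (by linarith)

private lemma neg_cover (n : ℕ) (a : ℤ) :
    ∀ m : ℕ, m ≤ n + 1 → m % 2 = 0 → ∀ x : ℤ, a - (Nat.fib m : ℤ) ^ 2 ≤ x → x < a →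
      ∃ k, k ≤ n + 1 ∧ a + b k ≤ x ∧ x < a + b k + Nat.fib (2 * n) := by
  intro m
  induction m using Nat.strong_induction_on with
  | _ m ih =>
    intro hm heven x h1 h2
    match m, heven, hm, h1, ih with
    | 0, _, _, h1', _ =>
      exfalso
      norm_num at h1'
      linarith
    | (m' + 2), heven', hm', h1', ih' =>
      by_cases hx0 : x < a - (Nat.fib (m' + 2) : ℤ) ^ 2 + Nat.fib (2 * n)
      · refine ⟨m' + 2, hm', ?_, ?_⟩ <;>
          rw [b_even (m' + 2) heven'] <;> linarith
      · push_neg at hx0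
        have hmo : m' % 2 = 0 := by omega
        have hle : 2 * m' + 2 ≤ 2 * n := by omega
        have hstep := fib_sq_step m'
        have hmono := fib_cast_mono hle
        exact ih' m' (by omega) (by omega) hmo x (by linarith) h2

private lemma fib_split (n : ℕ) :
    (Nat.fib (2 * (n + 1)) : ℤ) =
      Nat.fib (2 * n) + (Nat.fib n : ℤ) ^ 2 + (Nat.fib (n + 1) : ℤ) ^ 2 := by
  have h1 : 2 * (n + 1) = 2 * n + 2 := by ring
  have h2 : Nat.fib (2 * n + 2) = Nat.fib (2 * n) + Nat.fib (2 * n + 1) := Nat.fib_add_two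
  have h3 : 2 * n + 1 = n + n + 1 := by ring
  have h4 : Nat.fib (n + n + 1) =
      Nat.fib n * Nat.fib n + Nat.fib (n + 1) * Nat.fib (n + 1) := Nat.fib_add n n
  rw [h1, h2, h3, h4]
  push_cast
  ring

private lemma step_cover (n : ℕ) (hn : 2 ≤ n) (a : ℤ) (e o : ℕ)
    (he2 : e % 2 = 0) (ho2 : o % 2 = 1)
    (heo : (e = n ∧ o = n + 1) ∨ (e = n + 1 ∧ o = n)) :
    ∀ x : ℤ, a - (Nat.fib e : ℤ) ^ 2 ≤ x →
      x < a - (Nat.fib e : ℤ) ^ 2 + Nat.fib (2 * (n + 1)) →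
      ∃ k, k ≤ n + 1 ∧ a + b k ≤ x ∧ x < a + b k + Nat.fib (2 * n) := by
  intro x hx1 hx2
  have hfib : 1 ≤ (Nat.fib (2 * n) : ℤ) := by
    have : (1 : ℕ) ≤ Nat.fib (2 * n) := Nat.fib_pos.mpr (by omega)
    exact_mod_cast this
  have hsum : (Nat.fib (2 * (n + 1)) : ℤ) =
      Nat.fib (2 * n) + (Nat.fib e : ℤ) ^ 2 + (Nat.fib o : ℤ) ^ 2 := by
    have := fib_split n
    rcases heo with ⟨rfl, rfl⟩ | ⟨rfl, rfl⟩ <;> linarith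
  have heb : e ≤ n + 1 := by rcases heo with ⟨rfl, _⟩ | ⟨rfl, _⟩ <;> omega
  have hob : o ≤ n + 1 := by rcases heo with ⟨_, rfl⟩ | ⟨_, rfl⟩ <;> omega
  rcases le_or_gt a x with hax | hax
  · exact pos_cover n hfib a o hob ho2 x hax (by linarith)
  · exact neg_cover n a e heb he2 x (by linarith) hax

private lemma main_cover : ∀ n : ℕ, 2 ≤ n → ∃ a : ℤ, ∀ x : ℤ, a ≤ x →
    x < a + Nat.fib (2 * n) →
    ∃ f : Fin (n - 1) → ℤ, (∀ i, ∃ k, k ≤ n ∧ f i = b k) ∧ ∑ i, f i = x := by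
  intro n hn
  induction n, hn using Nat.le_induction with
  | base =>
    refine ⟨-1, ?_⟩
    intro x h1 h2
    have hf4 : ((Nat.fib (2 * 2) : ℕ) : ℤ) = 3 := by norm_num [Nat.fib]
    rw [hf4] at h2
    have hx : x = -1 ∨ x = 0 ∨ x = 1 := by omega
    rcases hx with rfl | rfl | rfl
    · exact ⟨fun _ => b 2, fun i => ⟨2, by omega, rfl⟩, by norm_num [b, Nat.fib]⟩
    · exact ⟨fun _ => b 0, fun i => ⟨0, by omega, rfl⟩, by norm_num [b, Nat.fib]⟩
    · exact ⟨fun _ => b 1, fun i => ⟨1, by omega, rfl⟩, by norm_num [b, Nat.fib]⟩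
  | succ n hn ih =>
    obtain ⟨a, ha⟩ := ih
    obtain ⟨m, rfl⟩ : ∃ m, n = m + 1 := ⟨n - 1, by omega⟩
    obtain ⟨e, o, he2, ho2, heo⟩ :
        ∃ e o : ℕ, e % 2 = 0 ∧ o % 2 = 1 ∧
          ((e = m + 1 ∧ o = m + 2) ∨ (e = m + 2 ∧ o = m + 1)) := by
      rcases Nat.even_or_odd m with h | h
      · have h' := Nat.even_iff.mp h
        exact ⟨m + 2, m + 1, by omega, by omega, Or.inr ⟨rfl, rfl⟩⟩
      · have h' := Nat.odd_iff.mp h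
        exact ⟨m + 1, m + 2, by omega, by omega, Or.inl ⟨rfl, rfl⟩⟩
    refine ⟨a - (Nat.fib e : ℤ) ^ 2, ?_⟩
    intro x hx1 hx2
    obtain ⟨k, hk, hk1, hk2⟩ := step_cover (m + 1) hn a e o he2 ho2
      (by omega) x hx1 hx2
    obtain ⟨f, hf, hfs⟩ := ha (x - b k) (by linarith) (by linarith)
    have hfs' : ∑ i : Fin m, f i = x - b k := hfs
    refine ⟨Fin.cons (b k) (f : Fin m → ℤ), ?_, ?_⟩
    · intro i
      refine Fin.cases ?_ ?_ i
      · exact ⟨k, hk, rfl⟩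
      · intro j
        obtain ⟨k', hk', hfk⟩ := hf j
        exact ⟨k', by omega, by simpa using hfk⟩
    · show ∑ i : Fin (m + 1), Fin.cons (b k) (f : Fin m → ℤ) i = x
      rw [Fin.sum_cons, hfs']
      ring

theorem strip_B_sumset_covers (n : ℕ) (hn : 2 ≤ n) (x : ZMod (Nat.fib (2 * n))) :
    ∃ f : Fin (n - 1) → ZMod (Nat.fib (2 * n)),
      (∀ i, ∃ k, k ≤ n ∧
        f i = (((-1) ^ (k + 1) * (Nat.fib k : ℤ) ^ 2 : ℤ) : ZMod (Nat.fib (2 * n)))) ∧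
      ∑ i, f i = x := by
  obtain ⟨a, ha⟩ := main_cover n hn
  have hFpos : 0 < Nat.fib (2 * n) := Nat.fib_pos.mpr (by omega)
  haveI : NeZero (Nat.fib (2 * n)) := ⟨hFpos.ne'⟩
  have hFpos' : (0 : ℤ) < (Nat.fib (2 * n) : ℤ) := by exact_mod_cast hFpos
  set x' : ℤ := a + ((x.val : ℤ) - a) % (Nat.fib (2 * n) : ℤ) with hx'
  have hmod1 := Int.emod_nonneg ((x.val : ℤ) - a) hFpos'.ne'
  have hmod2 := Int.emod_lt_of_pos ((x.val : ℤ) - a) hFpos'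
  obtain ⟨f, hf, hfs⟩ := ha x' (by omega) (by omega)
  refine ⟨fun i => ((f i : ℤ) : ZMod (Nat.fib (2 * n))), ?_, ?_⟩
  · intro i
    obtain ⟨k, hk, hfk⟩ := hf i
    exact ⟨k, hk, by show ((f i : ℤ) : ZMod (Nat.fib (2 * n))) = _; rw [hfk]; rfl⟩
  · have hdvd : (Nat.fib (2 * n) : ℤ) ∣ x' - (x.val : ℤ) := by
      refine ⟨-(((x.val : ℤ) - a) / (Nat.fib (2 * n) : ℤ)), ?_⟩
      rw [hx', Int.emod_def]
      ring
    have hcast : ((x' : ℤ) : ZMod (Nat.fib (2 * n))) = x := by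
      have h0 : ((x' - (x.val : ℤ) : ℤ) : ZMod (Nat.fib (2 * n))) = 0 := by
        rw [ZMod.intCast_zmod_eq_zero_iff_dvd]
        exact_mod_cast hdvd
      have h1 : ((x' : ℤ) : ZMod (Nat.fib (2 * n))) = (((x.val : ℤ)) : ZMod (Nat.fib (2 * n))) := by
        rw [← sub_eq_zero, ← Int.cast_sub]
        exact h0
      rw [h1]
      push_cast
      exact ZMod.natCast_rightInverse x
    rw [← hcast, ← hfs]
    push_cast
    rfl
end

section
/- For every n ≥ 3 there exists a residue class modulo F_{2n} that cannot be written as a sum of n-2 elements of the set A = {0} ∪ {F_{2k-1} : 1 ≤ k ≤ n} ⊆ ℤ/F_{2n}ℤ. -/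
/-!
Take `x = -1`. If `n - 2` elements of `A` summed to `-1`, then adding `F₁ = 1` would give
at most `n - 1` odd-indexed Fibonacci numbers `F₁, F₃, …, F_{2n-1}` (with repetition) whose sum is a
positive multiple of `F_{2n}`. But writing `a F_{2n} + b F_{2n-1}` with `a ≥ 1` in this way needs at
least `n - 1 + a + b` summands: the copies of the largest part `F_{2n-1}` can be peeled off, and
`F_{2n} = F_{2n-1} + F_{2n-2}`, `F_{2n-1} = F_{2n-2} + F_{2n-3}` turn the remainder into a
representation of `a' F_{2n-2} + b' F_{2n-3}` of the same shape, one index lower.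
-/

open Nat

theorem le_card_of_sum_fib_odd_eq (n : ℕ) (M : Multiset ℕ) (hM : ∀ j ∈ M, j ≤ n) {a b : ℤ}
    (ha : 1 ≤ a)
    (hsum : (M.map fun j => (fib (2 * j + 1) : ℤ)).sum = a * fib (2 * n + 2) + b * fib (2 * n + 1)) :
    n + a + b ≤ Multiset.card M := by
  induction n generalizing M a b with
  | zero =>
    have hones : (M.map fun j => (fib (2 * j + 1) : ℤ)) = M.map fun _ => 1 :=
      Multiset.map_congr rfl fun j hj => by simp [Nat.le_zero.mp (hM j hj)]
    simp only [hones, Multiset.map_const', Multiset.sum_replicate, Int.nsmul_eq_mul, mul_one,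
      mul_zero, zero_add, fib_two, cast_one, fib_one] at hsum
    simp [hsum]
  | succ n ih =>
    set top := M.filter fun j => ¬ j ≤ n
    set C : ℤ := (Multiset.card top : ℤ)
    have hsplit := Multiset.filter_add_not (· ≤ n) M
    have htop : (top.map fun j => (fib (2 * j + 1) : ℤ)).sum = C * fib (2 * n + 3) := by
      have : top.map (fun j => (fib (2 * j + 1) : ℤ)) = top.map fun _ => (fib (2 * n + 3) : ℤ) :=
        Multiset.map_congr rfl fun j hj => by
          have := Multiset.mem_filter.mp hj
          rw [show j = n + 1 by have := hM j this.1; omega]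
          rfl
      simp [this, C]
    have hfib₃ : (fib (2 * n + 3) : ℤ) = fib (2 * n + 2) + fib (2 * n + 1) := by
      rw [show 2 * n + 3 = 2 * n + 1 + 2 from rfl, fib_add_two]; push_cast; ring
    have hfib₄ : (fib (2 * n + 4) : ℤ) = fib (2 * n + 3) + fib (2 * n + 2) := by
      rw [show 2 * n + 4 = 2 * n + 2 + 2 from rfl, fib_add_two]; push_cast; ring
    have hrest : ((M.filter (· ≤ n)).map fun j => (fib (2 * j + 1) : ℤ)).sum
        = (2 * a + b - C) * fib (2 * n + 2) + (a + b - C) * fib (2 * n + 1) := by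
      rw [← hsplit, Multiset.map_add, Multiset.sum_add, htop] at hsum
      rw [show 2 * (n + 1) + 2 = 2 * n + 4 by ring, show 2 * (n + 1) + 1 = 2 * n + 3 by ring] at hsum
      linear_combination hsum + a * hfib₄ + (a + b - C) * hfib₃
    have hpos : (1 : ℤ) ≤ fib (2 * n + 1) := by exact_mod_cast fib_pos.mpr (by omega)
    -- otherwise both coefficients of `hrest` are negative or zero, the second one at most `-a`
    have hlead : 1 ≤ 2 * a + b - C := by
      by_contra! h
      have hnonneg : 0 ≤ ((M.filter (· ≤ n)).map fun j => (fib (2 * j + 1) : ℤ)).sum :=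
        Multiset.sum_nonneg fun x hx => by
          obtain ⟨j, -, rfl⟩ := Multiset.mem_map.mp hx
          positivity
      nlinarith [mul_nonpos_of_nonpos_of_nonneg (by linarith : 2 * a + b - C ≤ 0)
        (by positivity : (0 : ℤ) ≤ fib (2 * n + 2))]
    have hcard : (Multiset.card M : ℤ) = Multiset.card (M.filter (· ≤ n)) + C := by
      nth_rw 1 [← hsplit]
      rw [Multiset.card_add, Nat.cast_add]
    have := ih _ (fun j hj => (Multiset.mem_filter.mp hj).2) hlead hrest
    push_cast
    linarith

theorem Finset.exists_multiset_sum_map_eq {ι α R : Type*} [AddCommMonoid R] (s : Finset ι)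
    (f : ι → R) (g : α → R) (p : α → Prop) (h : ∀ i ∈ s, f i = 0 ∨ ∃ x, p x ∧ f i = g x) :
    ∃ M : Multiset α, Multiset.card M ≤ s.card ∧ (∀ x ∈ M, p x) ∧ (M.map g).sum = ∑ i ∈ s, f i := by
  induction s using Finset.cons_induction with
  | empty => exact ⟨0, by simp⟩
  | cons i s hi ih =>
    obtain ⟨M, hcard, hM, hsum⟩ := ih fun j hj => h j (Finset.mem_cons_of_mem hj)
    rw [Finset.sum_cons, Finset.card_cons, ← hsum]
    rcases h i (Finset.mem_cons_self i s) with hzero | ⟨x, hx, hfx⟩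
    · exact ⟨M, by omega, hM, by rw [hzero, zero_add]⟩
    · refine ⟨x ::ₘ M, by simpa using hcard, ?_, by rw [Multiset.map_cons, Multiset.sum_cons, hfx]⟩
      simpa [hx] using hM

theorem fan_sumset_not_covers (n : ℕ) (hn : 3 ≤ n) :
    ∃ x : ZMod (Nat.fib (2 * n)),
      ¬ ∃ f : Fin (n - 2) → ZMod (Nat.fib (2 * n)),
        (∀ i, f i = 0 ∨ ∃ k, 1 ≤ k ∧ k ≤ n ∧ f i = (Nat.fib (2 * k - 1) : ZMod (Nat.fib (2 * n)))) ∧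
        ∑ i, f i = x := by
  obtain ⟨m, rfl⟩ : ∃ m, n = m + 1 := ⟨n - 1, by omega⟩
  refine ⟨-1, ?_⟩
  rintro ⟨f, hf, hsum⟩
  obtain ⟨M, hcard, hM, hMsum⟩ := Finset.univ.exists_multiset_sum_map_eq f
    (fun j => (fib (2 * j + 1) : ZMod (fib (2 * (m + 1))))) (· ≤ m) fun i _ =>
      (hf i).imp_right fun ⟨k, hk1, hkn, hk⟩ =>
        ⟨k - 1, by omega, by rw [hk, show 2 * k - 1 = 2 * (k - 1) + 1 by omega]⟩
  obtain ⟨s, hs⟩ : fib (2 * (m + 1)) ∣ (M.map fun j => fib (2 * j + 1)).sum + 1 := by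
    rw [← ZMod.natCast_eq_zero_iff]
    push_cast [Nat.cast_multiset_sum, Multiset.map_map]
    rw [Function.comp_def, hMsum, hsum, neg_add_cancel]
  have hs_pos : 1 ≤ s := Nat.pos_of_ne_zero fun h => by simp [h] at hs
  have hrep : ((0 ::ₘ M).map fun j => (fib (2 * j + 1) : ℤ)).sum
      = s * fib (2 * m + 2) + 0 * fib (2 * m + 1) := by
    have hsZ := congrArg (Nat.cast : ℕ → ℤ) hs
    push_cast [Nat.cast_multiset_sum, Multiset.map_map, Function.comp_def] at hsZ
    rw [Multiset.map_cons, Multiset.sum_cons, fib_one, Nat.cast_one, add_comm, hsZ,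
      zero_mul, add_zero, mul_comm]
    rfl
  have hbound := le_card_of_sum_fib_odd_eq m (0 ::ₘ M) (by simpa using hM)
    (by exact_mod_cast hs_pos) hrep
  rw [Multiset.card_cons] at hbound
  rw [Finset.card_univ, Fintype.card_fin] at hcard
  omega
end

section
/- For all m ≥ 1, n ≥ 1, and indices 1 ≤ k_1,...,k_m, k'_1,...,k'_m ≤ n: the congruence Σ_{i=1}^m F_{2k_i-1} ≡ Σ_{i=1}^m F_{2k'_i-1} (mod F_{2n}) holds if and only if Σ_{i=1}^m F_{2n-2k_i+1} ≡ Σ_{i=1}^m F_{2n-2k'_i+1} (mod F_{2n}). -/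
lemma fib_sub_key (b : ℕ) : ∀ a, a ≤ b →
    (Nat.fib (b - a) : ZMod (Nat.fib b)) = (-1) ^ (a + 1) * Nat.fib (b + 1) * Nat.fib a := by
  intro a
  induction a using Nat.twoStepInduction with
  | zero => intro _; simp
  | one =>
    intro hb
    have h : Nat.fib (b - 1) + Nat.fib b = Nat.fib (b + 1) := by
      have : b - 1 + 2 = b + 1 := by omega
      rw [← this, Nat.fib_add_two, show b - 1 + 1 = b from by omega]
    have := congrArg (fun x : ℕ => (x : ZMod (Nat.fib b))) h
    push_cast at this
    simp only [ZMod.natCast_self, add_zero] at this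
    simp [this]
  | more a ih1 ih2 =>
    intro hb
    have h : Nat.fib (b - (a + 2)) + Nat.fib (b - (a + 1)) = Nat.fib (b - a) := by
      have h1 : b - a = (b - (a + 2)) + 2 := by omega
      have h2 : b - (a + 1) = (b - (a + 2)) + 1 := by omega
      rw [h1, h2, Nat.fib_add_two]
    have hc := congrArg (fun x : ℕ => (x : ZMod (Nat.fib b))) h
    push_cast at hc
    have e1 := ih1 (by omega)
    have e2 := ih2 (by omega)
    have : (Nat.fib (b - (a + 2)) : ZMod (Nat.fib b)) =
        (Nat.fib (b - a) : ZMod (Nat.fib b)) - Nat.fib (b - (a + 1)) := by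
      linear_combination hc
    rw [this, e1, e2, Nat.fib_add_two]
    push_cast
    ring

theorem freiman_fan (m n : ℕ) (hm : 1 ≤ m) (hn : 1 ≤ n)
    (k k' : Fin m → ℕ) (hk : ∀ i, 1 ≤ k i ∧ k i ≤ n) (hk' : ∀ i, 1 ≤ k' i ∧ k' i ≤ n) :
    (∑ i, (Nat.fib (2 * k i - 1) : ZMod (Nat.fib (2 * n))) =
        ∑ i, (Nat.fib (2 * k' i - 1) : ZMod (Nat.fib (2 * n)))) ↔
    (∑ i, (Nat.fib (2 * n - 2 * k i + 1) : ZMod (Nat.fib (2 * n))) =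
        ∑ i, (Nat.fib (2 * n - 2 * k' i + 1) : ZMod (Nat.fib (2 * n)))) := by
  haveI : NeZero (Nat.fib (2 * n)) := ⟨(Nat.fib_pos.mpr (by omega)).ne'⟩
  have key : ∀ (f : Fin m → ℕ), (∀ i, 1 ≤ f i ∧ f i ≤ n) →
      ∑ i, (Nat.fib (2 * n - 2 * f i + 1) : ZMod (Nat.fib (2 * n))) =
        (Nat.fib (2 * n + 1) : ZMod (Nat.fib (2 * n))) *
          ∑ i, (Nat.fib (2 * f i - 1) : ZMod (Nat.fib (2 * n))) := by
    intro f hf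
    rw [Finset.mul_sum]
    refine Finset.sum_congr rfl fun i _ => ?_
    obtain ⟨h1, h2⟩ := hf i
    have ha : 2 * n - 2 * f i + 1 = 2 * n - (2 * f i - 1) := by omega
    rw [ha, fib_sub_key (2 * n) (2 * f i - 1) (by omega)]
    have : 2 * f i - 1 + 1 = 2 * f i := by omega
    rw [this]
    rw [show (-1 : ZMod (Nat.fib (2*n))) ^ (2 * f i) = 1 by
      rw [pow_mul]; simp]
    ring
  rw [key k hk, key k' hk']
  have hu : IsUnit (Nat.fib (2 * n + 1) : ZMod (Nat.fib (2 * n))) := by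
    rw [ZMod.isUnit_iff_coprime]
    exact (Nat.fib_coprime_fib_succ (2 * n)).symm
  exact (IsUnit.mul_right_inj hu).symm
end

section
/- For all m ≥ 1, n ≥ 1, and indices 0 ≤ k_1,...,k_m, k'_1,...,k'_m ≤ n: the congruence Σ_{i=1}^m F_{k_i}·F_{2n-k_i} ≡ Σ_{i=1}^m F_{k'_i}·F_{2n-k'_i} (mod F_{2n}) holds if and only if Σ_{i=1}^m F_{n-k_i}·F_{n+k_i} ≡ Σ_{i=1}^m F_{n-k'_i}·F_{n+k'_i} (mod F_{2n}). -/
open Nat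
lemma fib_cast_add_two (R : Type*) [Semiring R] (a : ℕ) :
    (Nat.fib (a+2) : R) = Nat.fib a + Nat.fib (a+1) := by
  rw [Nat.fib_add_two]; push_cast; ring

lemma cassini (a : ℕ) : ((Nat.fib (a+1) : ℤ))^2 = Nat.fib a * Nat.fib (a+2) + (-1)^a := by
  induction a with
  | zero => simp
  | succ a ih =>
    have h3 := fib_cast_add_two ℤ (a+1)
    have h2 := fib_cast_add_two ℤ a
    simp only [show a+1+1 = a+2 from rfl, show a+1+2 = a+3 from rfl] at *
    linear_combination (-(Nat.fib (a+1):ℤ))*h3 - ih + (Nat.fib (a+2):ℤ)*h2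

lemma fib_cast_add (R : Type*) [Semiring R] (m n : ℕ) :
    (Nat.fib (m + n + 1) : R) = Nat.fib m * Nat.fib n + Nat.fib (m+1) * Nat.fib (n+1) := by
  rw [Nat.fib_add]; push_cast; ring

lemma vajda : ∀ (a i j : ℕ), (Nat.fib (a+i) : ℤ) * Nat.fib (a+j)
    = Nat.fib a * Nat.fib (a+i+j) + (-1)^a * Nat.fib i * Nat.fib j := by
  intro a
  induction a with
  | zero => intro i j; simp
  | succ a ih =>
    intro i j
    have hV := ih (i+1) (j+1)
    have h1 : (Nat.fib (a+i+j+1) : ℤ) = Nat.fib a * Nat.fib (i+j) + Nat.fib (a+1) * Nat.fib (i+j+1) := by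
      have := fib_cast_add ℤ a (i+j); rw [show a+(i+j) = a+i+j from by ring] at this; exact this
    have h2 : (Nat.fib (a+i+j+2) : ℤ) = Nat.fib a * Nat.fib (i+j+1) + Nat.fib (a+1) * Nat.fib (i+j+2) := by
      have := fib_cast_add ℤ a (i+j+1); rw [show a+(i+j+1)+1 = a+i+j+2 from by ring] at this; exact this
    have h3 : (Nat.fib (i+j+1) : ℤ) = Nat.fib i * Nat.fib j + Nat.fib (i+1) * Nat.fib (j+1) := fib_cast_add ℤ i j
    have h4 : (Nat.fib (i+j+2) : ℤ) = Nat.fib (i+j) + Nat.fib (i+j+1) := fib_cast_add_two ℤ (i+j)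
    have h5 : (Nat.fib (a+2) : ℤ) = Nat.fib a + Nat.fib (a+1) := fib_cast_add_two ℤ a
    have hC := cassini a
    have e1 : a+1+i = a+i+1 := by ring
    have e2 : a+1+j = a+j+1 := by ring
    have e3 : a+1+i+j = a+i+j+1 := by ring
    have e4 : a+(i+1) = a+i+1 := by ring
    have e5 : a+(j+1) = a+j+1 := by ring
    have e6 : a+i+1+(j+1) = a+i+j+2 := by ring
    rw [e3, e1, e2]
    rw [e4, e5, e6] at hV
    -- express fib(a+i+1) and fib(a+j+1) via fib_cast_add
    have hA : (Nat.fib (a+i+1) : ℤ) = Nat.fib a * Nat.fib i + Nat.fib (a+1) * Nat.fib (i+1) := fib_cast_add ℤ a i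
    have hB : (Nat.fib (a+j+1) : ℤ) = Nat.fib a * Nat.fib j + Nat.fib (a+1) * Nat.fib (j+1) := fib_cast_add ℤ a j
    rw [hA, hB, h1] 
    rw [hA, hB, h2] at hV
    linear_combination hV + ((Nat.fib a : ℤ) * Nat.fib (a+1)) * h4 - (-1:ℤ)^a * h3
      - (Nat.fib (i+j+1) : ℤ) * hC - ((Nat.fib (i+j+1) : ℤ) * Nat.fib a) * h5

lemma Lmod (n : ℕ) (hn : 1 ≤ n) : ∀ b a, a + b = 2*n →
    ((Nat.fib a : ZMod (Nat.fib (2*n)))) = (-1)^(b+1) * Nat.fib (2*n-1) * Nat.fib b := by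
  intro b
  induction b using Nat.twoStepInduction with
  | zero =>
    intro a ha
    simp only [Nat.add_zero] at ha
    subst ha
    simp [ZMod.natCast_self]
  | one =>
    intro a ha
    have : a = 2*n - 1 := by omega
    subst this
    simp
  | more b ih1 ih2 =>
    intro a ha
    have h1 := ih1 (a+2) (by omega)
    have h2 := ih2 (a+1) (by omega)
    have hf : (Nat.fib (a+2) : ZMod (Nat.fib (2*n))) = Nat.fib a + Nat.fib (a+1) :=
      fib_cast_add_two _ a
    have hb : (Nat.fib (b+2) : ZMod (Nat.fib (2*n))) = Nat.fib b + Nat.fib (b+1) :=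
      fib_cast_add_two _ b
    have : (Nat.fib a : ZMod (Nat.fib (2*n))) = Nat.fib (a+2) - Nat.fib (a+1) := by
      rw [hf]; ring
    rw [this, h1, h2, hb]
    ring

lemma neg_one_pow_sub {R : Type*} [Ring R] {k n : ℕ} (h : k ≤ n) :
    ((-1 : R))^(n - k) = (-1)^n * (-1)^k := by
  have : (-1:R)^(n-k) * ((-1)^k * (-1)^k) = (-1)^n * (-1)^k := by
    rw [← mul_assoc, ← pow_add, Nat.sub_add_cancel h]
  simpa [← pow_add, ← two_mul, pow_mul] using this

theorem freiman_strip (m n : ℕ) (hm : 1 ≤ m) (hn : 1 ≤ n)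
    (k k' : Fin m → ℕ) (hk : ∀ i, k i ≤ n) (hk' : ∀ i, k' i ≤ n) :
    (∑ i, ((Nat.fib (k i) * Nat.fib (2 * n - k i) : ℕ) : ZMod (Nat.fib (2 * n))) =
        ∑ i, ((Nat.fib (k' i) * Nat.fib (2 * n - k' i) : ℕ) : ZMod (Nat.fib (2 * n)))) ↔
    (∑ i, ((Nat.fib (n - k i) * Nat.fib (n + k i) : ℕ) : ZMod (Nat.fib (2 * n))) =
        ∑ i, ((Nat.fib (n - k' i) * Nat.fib (n + k' i) : ℕ) : ZMod (Nat.fib (2 * n)))) := by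
  set F := Nat.fib (2*n) with hF
  set C : ZMod F := (Nat.fib (2*n-1) : ZMod F) with hC
  -- term rewriting for LHS
  have hterm1 : ∀ j : ℕ, j ≤ n →
      ((Nat.fib j * Nat.fib (2*n - j) : ℕ) : ZMod F) = C * (-((-1)^j * (Nat.fib j : ZMod F)^2)) := by
    intro j hj
    have hL := Lmod n hn j (2*n - j) (by omega)
    push_cast
    rw [hL]
    ring
  -- term rewriting for RHS
  have hterm2 : ∀ j : ℕ, j ≤ n →
      ((Nat.fib (n - j) * Nat.fib (n + j) : ℕ) : ZMod F) =
        (Nat.fib n : ZMod F)^2 - (-1)^n * ((-1)^j * (Nat.fib j : ZMod F)^2) := by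
    intro j hj
    have hV := vajda (n - j) j j
    rw [show n - j + j = n by omega] at hV
    have hZ := congrArg (fun z : ℤ => (z : ZMod F)) hV
    push_cast at hZ
    rw [neg_one_pow_sub hj] at hZ
    push_cast
    linear_combination -hZ
  haveI : NeZero F := ⟨(Nat.fib_pos.mpr (by omega)).ne'⟩
  have hCu : IsUnit C := by
    rw [hC, ZMod.isUnit_iff_coprime]
    have h := Nat.fib_coprime_fib_succ (2*n-1)
    rwa [show 2*n-1+1 = 2*n by omega] at h
  have hNeg : IsUnit ((-1 : ZMod F)^n) := (isUnit_one.neg).pow n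
  have eL : ∀ (f : Fin m → ℕ), (∀ i, f i ≤ n) →
      ∑ i, ((Nat.fib (f i) * Nat.fib (2*n - f i) : ℕ) : ZMod F)
        = C * (- ∑ i, (-1:ZMod F)^(f i) * (Nat.fib (f i) : ZMod F)^2) := by
    intro f hf
    rw [Finset.sum_congr rfl (fun i _ => hterm1 (f i) (hf i)), ← Finset.mul_sum]
    congr 1
    rw [← Finset.sum_neg_distrib]
  have eR : ∀ (f : Fin m → ℕ), (∀ i, f i ≤ n) →
      ∑ i, ((Nat.fib (n - f i) * Nat.fib (n + f i) : ℕ) : ZMod F)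
        = (∑ _i : Fin m, (Nat.fib n : ZMod F)^2)
          - (-1:ZMod F)^n * ∑ i, (-1:ZMod F)^(f i) * (Nat.fib (f i) : ZMod F)^2 := by
    intro f hf
    rw [Finset.sum_congr rfl (fun i _ => hterm2 (f i) (hf i)), Finset.sum_sub_distrib,
      ← Finset.mul_sum]
  rw [eL k hk, eL k' hk', eR k hk, eR k' hk',
    hCu.mul_right_inj, neg_inj, sub_right_inj, hNeg.mul_right_inj]
end

section
/- For every even k with 2 ≤ k ≤ n, F_k·F_{2n-k} = Σ_{r=1}^{k/2} F_{2n+2-4r}, and for every odd k with 1 ≤ k ≤ n, F_k·F_{2n-k} = F_{2n-2k+1} + Σ_{r=1}^{⌊k/2⌋} F_{2n+2-4r}. In particular, for 2 ≤ k ≤ n we have F_{2n-2} ≤ F_k·F_{2n-k} < F_{2n-1}. -/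
lemma fibA (m : ℕ) : ∀ d,
    Nat.fib (2*m+1) * Nat.fib (2*m+d) = Nat.fib (2*m) * Nat.fib (2*m+d+1) + Nat.fib d ∧
    Nat.fib (2*m+2) * Nat.fib (2*m+1+d) + Nat.fib d = Nat.fib (2*m+1) * Nat.fib (2*m+2+d) := by
  induction m with
  | zero =>
    intro d
    refine ⟨by simp, ?_⟩
    have : Nat.fib (2+d) = Nat.fib d + Nat.fib (d+1) := by
      rw [show 2+d = d+2 from by omega, Nat.fib_add_two]
    simp [this, Nat.fib_one, Nat.fib_two, show 1+d = d+1 from by omega]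
    omega
  | succ m ih =>
    intro d
    obtain ⟨h1, h2⟩ := ih d
    have e1 : Nat.fib (2*m+3) = Nat.fib (2*m+1) + Nat.fib (2*m+2) := by
      rw [show 2*m+3 = (2*m+1)+2 from by omega, Nat.fib_add_two]
    have e2 : Nat.fib (2*m+3+d) = Nat.fib (2*m+1+d) + Nat.fib (2*m+2+d) := by
      rw [show 2*m+3+d = (2*m+1+d)+2 from by omega, Nat.fib_add_two,
        show 2*m+1+d+1 = 2*m+2+d from by omega]
    have e3 : Nat.fib (2*m+4) = Nat.fib (2*m+2) + Nat.fib (2*m+3) := by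
      rw [show 2*m+4 = (2*m+2)+2 from by omega, Nat.fib_add_two]
    have e4 : Nat.fib (2*m+4+d) = Nat.fib (2*m+2+d) + Nat.fib (2*m+3+d) := by
      rw [show 2*m+4+d = (2*m+2+d)+2 from by omega, Nat.fib_add_two,
        show 2*m+2+d+1 = 2*m+3+d from by omega]
    have g1 : Nat.fib (2*m+3) * Nat.fib (2*m+2+d) =
        Nat.fib (2*m+2) * Nat.fib (2*m+3+d) + Nat.fib d := by
      rw [e1, e2]; ring_nf; ring_nf at h2; linarith [h2]
    have g2 : Nat.fib (2*m+4) * Nat.fib (2*m+3+d) + Nat.fib d =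
        Nat.fib (2*m+3) * Nat.fib (2*m+4+d) := by
      rw [e3, e4]; ring_nf; ring_nf at g1; linarith [g1]
    constructor
    · rw [show 2*(m+1)+1 = 2*m+3 from by omega, show 2*(m+1)+d = 2*m+2+d from by omega,
        show 2*(m+1) = 2*m+2 from by omega]
      rw [show 2*m+2+d+1 = 2*m+3+d from by omega]
      exact g1
    · rw [show 2*(m+1)+2 = 2*m+4 from by omega, show 2*(m+1)+1+d = 2*m+3+d from by omega,
        show 2*(m+1)+1 = 2*m+3 from by omega]
      exact g2

lemma fibKey (n : ℕ) : ∀ m,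
    (2*m+1 ≤ n → Nat.fib (2*m+1) * Nat.fib (2*n - (2*m+1)) =
      Nat.fib (2*n - 2*(2*m+1) + 1) + ∑ r ∈ Finset.Icc 1 m, Nat.fib (2*n+2-4*r)) ∧
    (2*m+2 ≤ n → Nat.fib (2*m+2) * Nat.fib (2*n - (2*m+2)) =
      ∑ r ∈ Finset.Icc 1 (m+1), Nat.fib (2*n+2-4*r)) := by
  intro m
  induction m with
  | zero =>
    constructor
    · intro h
      rw [show 2*0+1 = 1 from rfl, Nat.fib_one, one_mul,
        show 2*n - 2*(2*0+1) + 1 = 2*n - 1 from by omega]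
      simp
    · intro h
      rw [show (2*0+2 : ℕ) = 2 from rfl, Nat.fib_two, one_mul]
      rw [show (0+1 : ℕ) = 1 from rfl, Finset.Icc_self, Finset.sum_singleton,
        show 2*n+2-4*1 = 2*n-2 from by omega]
  | succ m ih =>
    have godd' : 2*m+3 ≤ n → Nat.fib (2*m+3) * Nat.fib (2*n - (2*m+3)) =
        Nat.fib (2*n - (4*m+5)) + ∑ r ∈ Finset.Icc 1 (m+1), Nat.fib (2*n+2-4*r) := by
      intro h
      have he := ih.2 (by omega)
      have hA := (fibA (m+1) (2*n - (4*m+5))).1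
      rw [show 2*(m+1)+(2*n-(4*m+5))+1 = 2*n-(2*m+2) from by omega] at hA
      rw [show 2*(m+1)+(2*n-(4*m+5)) = 2*n-(2*m+3) from by omega] at hA
      rw [show 2*(m+1)+1 = 2*m+3 from by omega] at hA
      rw [show 2*(m+1) = 2*m+2 from by omega] at hA
      omega
    constructor
    · intro h
      rw [show 2*n-2*(2*(m+1)+1)+1 = 2*n-(4*m+5) from by omega]
      rw [show 2*(m+1)+1 = 2*m+3 from by omega]
      exact godd' (by omega)
    · intro h
      have ho := godd' (by omega)
      have hA := (fibA (m+1) (2*n - (4*m+7))).2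
      rw [show 2*(m+1)+1+(2*n-(4*m+7)) = 2*n-(2*m+4) from by omega] at hA
      rw [show 2*(m+1)+2+(2*n-(4*m+7)) = 2*n-(2*m+3) from by omega] at hA
      rw [show 2*(m+1)+2 = 2*m+4 from by omega] at hA
      rw [show 2*(m+1)+1 = 2*m+3 from by omega] at hA
      have hsplit : Nat.fib (2*n-(4*m+5)) =
          Nat.fib (2*n-(4*m+7)) + Nat.fib (2*n+2-4*(m+1+1)) := by
        rw [show 2*n-(4*m+5) = (2*n-(4*m+7))+2 from by omega, Nat.fib_add_two,
          show 2*n-(4*m+7)+1 = 2*n+2-4*(m+1+1) from by omega]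
      have hsum : ∑ r ∈ Finset.Icc 1 (m+1+1), Nat.fib (2*n+2-4*r) =
          (∑ r ∈ Finset.Icc 1 (m+1), Nat.fib (2*n+2-4*r)) + Nat.fib (2*n+2-4*(m+1+1)) := by
        rw [← Finset.sum_Icc_succ_top (by omega)]
      rw [show 2*(m+1)+2 = 2*m+4 from by omega]
      omega

lemma fibBound (n : ℕ) (hn : 2 ≤ n) : ∀ m, 1 ≤ m → 2*m ≤ n →
    (∑ r ∈ Finset.Icc 1 m, Nat.fib (2*n+2-4*r)) + Nat.fib (2*n+1-4*m) ≤ Nat.fib (2*n-1) := by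
  intro m
  induction m with
  | zero => omega
  | succ m ih =>
    intro _ h2
    rcases Nat.eq_zero_or_pos m with rfl | hm
    · rw [show (0+1 : ℕ) = 1 from rfl, Finset.Icc_self, Finset.sum_singleton]
      rw [show 2*n+2-4*1 = 2*n-2 from by omega, show 2*n+1-4*1 = 2*n-3 from by omega]
      rw [show 2*n-1 = (2*n-3)+2 from by omega, Nat.fib_add_two,
        show 2*n-3+1 = 2*n-2 from by omega]
      omega
    · have ihm := ih hm (by omega)
      have hsum : ∑ r ∈ Finset.Icc 1 (m+1), Nat.fib (2*n+2-4*r) =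
          (∑ r ∈ Finset.Icc 1 m, Nat.fib (2*n+2-4*r)) + Nat.fib (2*n+2-4*(m+1)) := by
        rw [← Finset.sum_Icc_succ_top (by omega)]
      have hadd : Nat.fib (2*n+2-4*(m+1)) + Nat.fib (2*n+1-4*(m+1)) = Nat.fib (2*n-1-4*m) := by
        rw [show 2*n-1-4*m = (2*n+1-4*(m+1))+2 from by omega, Nat.fib_add_two,
          show 2*n+1-4*(m+1)+1 = 2*n+2-4*(m+1) from by omega]
        omega
      have hmono : Nat.fib (2*n-1-4*m) ≤ Nat.fib (2*n+1-4*m) := Nat.fib_mono (by omega)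
      omega

theorem zeckendorf_form_A (n : ℕ) :
    (∀ k, Even k → 2 ≤ k → k ≤ n →
      Nat.fib k * Nat.fib (2 * n - k) = ∑ r ∈ Finset.Icc 1 (k / 2), Nat.fib (2 * n + 2 - 4 * r)) ∧
    (∀ k, Odd k → 1 ≤ k → k ≤ n →
      Nat.fib k * Nat.fib (2 * n - k) =
        Nat.fib (2 * n - 2 * k + 1) + ∑ r ∈ Finset.Icc 1 (k / 2), Nat.fib (2 * n + 2 - 4 * r)) ∧
    (∀ k, 2 ≤ k → k ≤ n →
      Nat.fib (2 * n - 2) ≤ Nat.fib k * Nat.fib (2 * n - k) ∧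
        Nat.fib k * Nat.fib (2 * n - k) < Nat.fib (2 * n - 1)) := by
  refine ⟨?_, ?_, ?_⟩
  · intro k hk h2 hkn
    have hk2 : k % 2 = 0 := Nat.even_iff.mp hk
    obtain ⟨m, rfl⟩ : ∃ m, k = 2*m+2 := ⟨k/2-1, by omega⟩
    rw [show (2*m+2)/2 = m+1 from by omega]
    exact (fibKey n m).2 (by omega)
  · intro k hk h1 hkn
    have hk2 : k % 2 = 1 := Nat.odd_iff.mp hk
    obtain ⟨m, rfl⟩ : ∃ m, k = 2*m+1 := ⟨k/2, by omega⟩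
    rw [show (2*m+1)/2 = m from by omega]
    exact (fibKey n m).1 (by omega)
  · intro k h2 hkn
    have hn : 2 ≤ n := le_trans h2 hkn
    rcases Nat.even_or_odd k with hk | hk
    · have hk2 : k % 2 = 0 := Nat.even_iff.mp hk
      obtain ⟨m, rfl⟩ : ∃ m, k = 2*m+2 := ⟨k/2-1, by omega⟩
      have hv := (fibKey n m).2 (by omega)
      have hlow : Nat.fib (2*n+2-4*1) ≤ ∑ r ∈ Finset.Icc 1 (m+1), Nat.fib (2*n+2-4*r) :=
        Finset.single_le_sum (f := fun r => Nat.fib (2*n+2-4*r))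
          (fun i _ => Nat.zero_le _) (by simp)
      rw [show 2*n+2-4*1 = 2*n-2 from by omega] at hlow
      have hup := fibBound n hn (m+1) (by omega) (by omega)
      have hpos : 0 < Nat.fib (2*n+1-4*(m+1)) := Nat.fib_pos.mpr (by omega)
      constructor <;> omega
    · have hk2 : k % 2 = 1 := Nat.odd_iff.mp hk
      obtain ⟨m, rfl⟩ : ∃ m, k = 2*m+1 := ⟨k/2, by omega⟩
      have hm1 : 1 ≤ m := by omega
      have hv := (fibKey n m).1 (by omega)
      have hlow : Nat.fib (2*n+2-4*1) ≤ ∑ r ∈ Finset.Icc 1 m, Nat.fib (2*n+2-4*r) :=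
        Finset.single_le_sum (f := fun r => Nat.fib (2*n+2-4*r))
          (fun i _ => Nat.zero_le _) (by simp; omega)
      rw [show 2*n+2-4*1 = 2*n-2 from by omega] at hlow
      have hup := fibBound n hn m (by omega) (by omega)
      have hstep : Nat.fib (2*n-2*(2*m+1)+1) + Nat.fib (2*n-4*m) = Nat.fib (2*n+1-4*m) := by
        rw [show 2*n+1-4*m = (2*n-2*(2*m+1)+1)+2 from by omega, Nat.fib_add_two,
          show 2*n-2*(2*m+1)+1+1 = 2*n-4*m from by omega]
      have hpos : 0 < Nat.fib (2*n-4*m) := Nat.fib_pos.mpr (by omega)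
      constructor <;> omega
end

section
/- For every n ≥ 2 and every k with 2 ≤ k ≤ n, the Fibonacci product satisfies F_{2n-2} ≤ F_k·F_{2n-k} and F_k·F_{2n-k} + F_{2n-3} < F_{2n}. -/
lemma fib_aux1 (a b : ℕ) (_h : a ≤ b) : a*a + b*b ≤ (a+b)*b := by nlinarith

lemma fib_aux2 (a b : ℕ) : a*b + b*(a+b) ≤ (a+b)*(a+b) := by nlinarith

lemma fib_aux3 (a b f : ℕ) (h : a ≤ b) (hf : f ≤ a*a + b*b) :
    (a+b)*b + f ≤ b*b + (a+b)*(a+b) := by nlinarith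

lemma fib_aux4 (a b : ℕ) (h : a ≤ b) (h1 : 1 ≤ b) :
    (a+b)*(a+b) + (a*a + b*b) < b*(a+b) + (a+b)*(b+(a+b)) := by nlinarith


theorem fib_product_bounds (n k : ℕ) (hn : 2 ≤ n) (hk2 : 2 ≤ k) (hk : k ≤ n) :
    Nat.fib (2 * n - 2) ≤ Nat.fib k * Nat.fib (2 * n - k) ∧
      Nat.fib k * Nat.fib (2 * n - k) + Nat.fib (2 * n - 3) < Nat.fib (2 * n) := by
  obtain ⟨j, rfl⟩ := Nat.exists_eq_add_of_le hk2
  obtain ⟨t, rfl⟩ := Nat.exists_eq_add_of_le hk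
  rw [show 2 * (2 + j + t) - 2 = 2*t + (2*j+1) + 1 from by omega,
      show 2 * (2 + j + t) - (2 + j) = 2*t + (j+1) + 1 from by omega,
      show 2 * (2 + j + t) - 3 = 2*t + (2*j) + 1 from by omega,
      show 2 * (2 + j + t) = 2*t + (2*j+3) + 1 from by omega,
      show 2 + j = j + 2 from by omega]
  have E1 : Nat.fib (2*t + (2*j+1) + 1)
      = Nat.fib (2*t) * Nat.fib (2*j+1) + Nat.fib (2*t+1) * Nat.fib (2*j+2) :=
    Nat.fib_add _ _
  have E2 : Nat.fib (2*t + (j+1) + 1)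
      = Nat.fib (2*t) * Nat.fib (j+1) + Nat.fib (2*t+1) * Nat.fib (j+2) :=
    Nat.fib_add _ _
  have E3 : Nat.fib (2*t + (2*j) + 1)
      = Nat.fib (2*t) * Nat.fib (2*j) + Nat.fib (2*t+1) * Nat.fib (2*j+1) :=
    Nat.fib_add _ _
  have E4 : Nat.fib (2*t + (2*j+3) + 1)
      = Nat.fib (2*t) * Nat.fib (2*j+3) + Nat.fib (2*t+1) * Nat.fib (2*j+4) :=
    Nat.fib_add _ _
  rw [E1, E2, E3, E4]
  have e1 : Nat.fib (2*j+1) = Nat.fib j * Nat.fib j + Nat.fib (j+1) * Nat.fib (j+1) := by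
    have h := Nat.fib_add j j
    rw [show 2*j+1 = j + j + 1 from by omega]
    exact h
  have e2 : Nat.fib (2*j+2) = Nat.fib j * Nat.fib (j+1) + Nat.fib (j+1) * Nat.fib (j+2) := by
    have h := Nat.fib_add j (j+1)
    rw [show 2*j+2 = j + (j+1) + 1 from by omega]
    exact h
  have e3 : Nat.fib (2*j+3) = Nat.fib (j+1) * Nat.fib (j+1) + Nat.fib (j+2) * Nat.fib (j+2) := by
    have h := Nat.fib_add (j+1) (j+1)
    rw [show 2*j+3 = (j+1) + (j+1) + 1 from by omega]
    exact h
  have e4 : Nat.fib (2*j+4) = Nat.fib (j+1) * Nat.fib (j+2) + Nat.fib (j+2) * Nat.fib (j+3) := by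
    have h := Nat.fib_add (j+1) (j+2)
    rw [show 2*j+4 = (j+1) + (j+2) + 1 from by omega]
    exact h
  have e5 : Nat.fib (2*j) ≤ Nat.fib (2*j+1) := Nat.fib_mono (Nat.le_succ _)
  have e6 : Nat.fib (j+2) = Nat.fib j + Nat.fib (j+1) := Nat.fib_add_two
  have e7 : Nat.fib (j+3) = Nat.fib (j+1) + Nat.fib (j+2) := Nat.fib_add_two
  have e8 : Nat.fib j ≤ Nat.fib (j+1) := Nat.fib_mono (Nat.le_succ _)
  have e9 : 1 ≤ Nat.fib (j+1) := Nat.fib_pos.mpr (by omega)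
  have e10 : 1 ≤ Nat.fib (2*t+1) := Nat.fib_pos.mpr (by omega)
  constructor
  · rw [e1, e2, e6]
    have H1 := mul_le_mul_right (fib_aux1 _ _ e8) (Nat.fib (2*t))
    have H2 := mul_le_mul_right (fib_aux2 (Nat.fib j) (Nat.fib (j+1))) (Nat.fib (2*t+1))
    linarith [H1, H2]
  · rw [e1, e3, e4, e7, e6]
    have hf : Nat.fib (2*j) ≤ Nat.fib j * Nat.fib j + Nat.fib (j+1) * Nat.fib (j+1) := e1 ▸ e5
    have H3 := mul_le_mul_right (fib_aux3 _ _ _ e8 hf) (Nat.fib (2*t))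
    have H4 := Nat.mul_lt_mul_of_pos_left (fib_aux4 _ _ e8 e9) (lt_of_lt_of_le one_pos e10)
    linarith [H3, H4]
end
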